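/- Let f : M → N be a smooth map between smooth manifolds, and for k = 0, 1, 2, … define inductively the open sets X_k ⊆ M: X_1 is the set of points where rank df attains its maximum r_1 over M; given X_1, …, X_k, let X_{k+1} be the set of points in M \ (closure of X_1 ∪ … ∪ X_k) where rank df attains its maximum over that set. Then the maximal ranks r_1 > r_2 > … are strictly decreasing, the process terminates after finitely many steps, and M equals the union of the closures of the X_k. -/

import Mathlib

open Manifold Set Module

/-!
The rank is bounded by `dim N`, so it attains its maximum on every nonempty set. Each stratum
consists of maximisers on the residual set `M \ closure (X 0 ∪ ⋯ ∪ X (k - 1))`, so a point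
of `X (k + 1)` with the rank of `X k` would already lie in `X k`; hence the ranks drop by
at least one per step, a point of `X k` has rank at most `dim N - k`, and `X k = ∅` for `k > dim N`.
A point outside every `closure (X k)` would lie in every residual set, and a maximiser of the rank on the
residual set at stage `dim N + 1` would be a point of the empty stratum `X (dim N + 1)`.
-/

theorem finrank_range_mfderiv_le
    {E : Type*} [NormedAddCommGroup E] [NormedSpace ℝ E]
    {H : Type*} [TopologicalSpace H] {I : ModelWithCorners ℝ E H}
    {M : Type*} [TopologicalSpace M] [ChartedSpace H M]
    {E' : Type*} [NormedAddCommGroup E'] [NormedSpace ℝ E'] [FiniteDimensional ℝ E']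
    {H' : Type*} [TopologicalSpace H'] {I' : ModelWithCorners ℝ E' H'}
    {N : Type*} [TopologicalSpace N] [ChartedSpace H' N] (f : M → N) (x : M) :
    finrank ℝ (LinearMap.range
      (mfderiv I I' f x : TangentSpace I x →ₗ[ℝ] TangentSpace I' (f x))) ≤ finrank ℝ E' :=
  have : FiniteDimensional ℝ (TangentSpace I' (f x)) := ‹FiniteDimensional ℝ E'›
  Submodule.finrank_le _

namespace RankStratification

variable {M : Type*} [TopologicalSpace M]

def residual (X : ℕ → Set M) (k : ℕ) : Set M := univ \ closure (⋃ j < k, X j)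

theorem residual_succ_subset (X : ℕ → Set M) (k : ℕ) : residual X (k + 1) ⊆ residual X k :=
  sdiff_subset_sdiff_right <| closure_mono <|
    iUnion₂_mono' fun j hj => ⟨j, Nat.lt_succ_of_lt hj, subset_rfl⟩

theorem mem_residual_of_forall_notMem_closure {X : ℕ → Set M} {x : M}
    (hx : ∀ j, x ∉ closure (X j)) (k : ℕ) : x ∈ residual X k := by
  refine ⟨trivial, fun hc => ?_⟩
  rw [closure_iUnion₂_lt_nat] at hc
  obtain ⟨j, -, hj⟩ := mem_iUnion₂.1 hc
  exact hx j hj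

variable {rk : M → ℕ} {X : ℕ → Set M}
  (hX : ∀ k, X k = {x | x ∈ residual X k ∧ ∀ y ∈ residual X k, rk y ≤ rk x})
include hX

theorem rank_lt_of_mem_succ {k : ℕ} {x y : M} (hx : x ∈ X k) (hy : y ∈ X (k + 1)) :
    rk y < rk x := by
  rw [hX] at hx hy
  have hyR : y ∈ residual X k := residual_succ_subset X k hy.1
  refine (hx.2 y hyR).lt_of_ne fun hxy => hy.1.2 (subset_closure ?_)
  have hyX : y ∈ X k := by
    rw [hX]
    exact ⟨hyR, fun z hz => (hx.2 z hz).trans hxy.ge⟩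
  exact mem_iUnion₂.2 ⟨k, Nat.lt_succ_self k, hyX⟩

variable {D : ℕ} (hD : ∀ x, rk x ≤ D)
include hD

theorem nonempty_of_nonempty_residual {k : ℕ} (hk : (residual X k).Nonempty) : (X k).Nonempty := by
  obtain ⟨_, ⟨x, hxR, rfl⟩, hmax⟩ :=
    BddAbove.exists_isGreatest_of_nonempty (S := rk '' residual X k)
      ⟨D, forall_mem_image.2 fun y _ => hD y⟩ (hk.image rk)
  refine ⟨x, ?_⟩
  rw [hX]
  exact ⟨hxR, fun y hy => hmax (mem_image_of_mem rk hy)⟩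

theorem rank_add_le : ∀ k, ∀ x ∈ X k, rk x + k ≤ D
  | 0, x, _ => hD x
  | k + 1, x, hx => by
    have hxR : x ∈ residual X (k + 1) := by rw [hX] at hx; exact hx.1
    obtain ⟨y, hy⟩ := nonempty_of_nonempty_residual hX hD ⟨x, residual_succ_subset X k hxR⟩
    have := rank_lt_of_mem_succ hX hy hx
    have := rank_add_le k y hy
    omega

theorem eq_empty_of_lt {k : ℕ} (hk : D < k) : X k = ∅ :=
  eq_empty_of_forall_notMem fun x hx => by
    have := rank_add_le hX hD k x hx
    omega

theorem iUnion_closure_eq_univ : ⋃ k, closure (X k) = univ := by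
  refine eq_univ_of_forall fun x => ?_
  by_contra hx
  simp only [mem_iUnion, not_exists] at hx
  have hne := nonempty_of_nonempty_residual hX hD
    ⟨x, mem_residual_of_forall_notMem_closure hx (D + 1)⟩
  rw [eq_empty_of_lt hX hD (Nat.lt_succ_self D)] at hne
  exact not_nonempty_empty hne

end RankStratification

open RankStratification in
theorem rank_stratification_general
    {E : Type*} [NormedAddCommGroup E] [NormedSpace ℝ E]
    {H : Type*} [TopologicalSpace H] {I : ModelWithCorners ℝ E H}
    {M : Type*} [TopologicalSpace M] [ChartedSpace H M]
    {E' : Type*} [NormedAddCommGroup E'] [NormedSpace ℝ E'] [FiniteDimensional ℝ E']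
    {H' : Type*} [TopologicalSpace H'] {I' : ModelWithCorners ℝ E' H'}
    {N : Type*} [TopologicalSpace N] [ChartedSpace H' N]
    (f : M → N)
    (rk : M → ℕ)
    (hrk : ∀ x : M, rk x = finrank ℝ (LinearMap.range (mfderiv I I' f x : TangentSpace I x →ₗ[ℝ] TangentSpace I' (f x))))
    (X : ℕ → Set M)
    (hX : ∀ k : ℕ, X k =
      {x : M | x ∈ (Set.univ \ closure (⋃ j < k, X j)) ∧
        ∀ y ∈ (Set.univ \ closure (⋃ j < k, X j)), rk y ≤ rk x}) :
    (∀ k : ℕ, ∀ x ∈ X k, ∀ y ∈ X (k + 1), rk y < rk x) ∧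
    (∃ K : ℕ, ∀ k : ℕ, K ≤ k → X k = ∅) ∧
    (⋃ k : ℕ, closure (X k)) = Set.univ := by
  have hD : ∀ x, rk x ≤ finrank ℝ E' := fun x => hrk x ▸ finrank_range_mfderiv_le f x
  exact ⟨fun k x hx y hy => rank_lt_of_mem_succ hX hx hy,
    ⟨finrank ℝ E' + 1, fun k hk => eq_empty_of_lt hX hD hk⟩,
    iUnion_closure_eq_univ hX hD⟩

/-- (Stratification by rank.)  Let `f : M → N` be a smooth map
between finite-dimensional smooth manifolds and let `rk x` denote the rank of `df_x`.
Define inductively `X k` as the set of points of `R k := M \ closure (X 0 ∪ ⋯ ∪ X (k-1))`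
where `rk` attains its maximum over `R k`.  Then the ranks along consecutive nonempty
strata strictly decrease, the process terminates after finitely many steps, and `M` is
the union of the closures of the `X k`. -/
theorem rank_stratification
    {E : Type*} [NormedAddCommGroup E] [NormedSpace ℝ E] [FiniteDimensional ℝ E]
    {H : Type*} [TopologicalSpace H] {I : ModelWithCorners ℝ E H}
    {M : Type*} [TopologicalSpace M] [ChartedSpace H M] [IsManifold I (⊤ : ℕ∞) M]
    {E' : Type*} [NormedAddCommGroup E'] [NormedSpace ℝ E'] [FiniteDimensional ℝ E']
    {H' : Type*} [TopologicalSpace H'] {I' : ModelWithCorners ℝ E' H'}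
    {N : Type*} [TopologicalSpace N] [ChartedSpace H' N] [IsManifold I' (⊤ : ℕ∞) N]
    (f : M → N) (hf : ContMDiff I I' (⊤ : ℕ∞) f)
    (rk : M → ℕ)
    (hrk : ∀ x : M, rk x = finrank ℝ (LinearMap.range (mfderiv I I' f x : TangentSpace I x →ₗ[ℝ] TangentSpace I' (f x))))
    (X : ℕ → Set M)
    (hX : ∀ k : ℕ, X k =
      {x : M | x ∈ (Set.univ \ closure (⋃ j < k, X j)) ∧
        ∀ y ∈ (Set.univ \ closure (⋃ j < k, X j)), rk y ≤ rk x}) :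
    (∀ k : ℕ, ∀ x ∈ X k, ∀ y ∈ X (k + 1), rk y < rk x) ∧
    (∃ K : ℕ, ∀ k : ℕ, K ≤ k → X k = ∅) ∧
    (⋃ k : ℕ, closure (X k)) = Set.univ :=
  rank_stratification_general f rk hrk X hX
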